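/- Let ℓ ≥ 3 and let j be an integer with 2 ≤ j ≤ ℓ. Then for all real x with 0 < x < 1/2 (both series below converge absolutely): Σ_{n≥0} (Σ_{0≤m≤n, m≡ℓ−j (mod ℓ)} b(n,m))·x^n = U_{j−2}(1/(2x)) · Σ_{n≥0} (Σ_{0≤m≤n, m≡ℓ−2 (mod ℓ)} b(n,m))·x^n. -/

import Mathlib

open Filter Real

/-- `aa n m` = number of length-`n` paths on `ℤ≥0` with steps `±1` starting at `0`
and ending at `m`. -/
def aa : ℕ → ℕ → ℕ
  | 0, m => if m = 0 then 1 else 0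
  | n+1, m => aa n (m+1) + (if m = 0 then 0 else aa n (m-1))

/-- `aSum n = Σ_{m=0}^n aa n m`. -/
def aSum (n : ℕ) : ℕ := ∑ m ∈ Finset.range (n+1), aa n m

/-- The modular variant `b(n,m)` depending on `ℓ`:
`b(n,m) = a(n,m)` if `m ≡ ℓ-1 (mod ℓ)`; otherwise `b(0,m) = δ_{m,0}`, and for `n ≥ 1`,
`b(n,m) = b(n-1,m-1) + b(n-1,m+1)` if `m % ℓ < ℓ-2` (negative-index terms are `0`),
and `b(n,m) = b(n-1,m-1)` if `m ≡ ℓ-2 (mod ℓ)`. -/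
def bb (ℓ : ℕ) : ℕ → ℕ → ℕ
  | 0, m => if m % ℓ = ℓ - 1 then aa 0 m else if m = 0 then 1 else 0
  | n+1, m =>
    if m % ℓ = ℓ - 1 then aa (n+1) m
    else if m % ℓ = ℓ - 2 then (if m = 0 then 0 else bb ℓ n (m-1))
    else (if m = 0 then 0 else bb ℓ n (m-1)) + bb ℓ n (m+1)

/-- `bSum ℓ n = Σ_{m=0}^n bb ℓ n m`. -/
def bSum (ℓ : ℕ) (n : ℕ) : ℕ := ∑ m ∈ Finset.range (n+1), bb ℓ n m

/-- `cc ℓ n r = Σ_{m ≥ 0, m ≡ r (mod ℓ)} aa n m` (finite since `aa n m = 0` for `m > n`). -/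
def cc (ℓ : ℕ) (n r : ℕ) : ℕ :=
  ∑ m ∈ Finset.range (n+1), if m % ℓ = r then aa n m else 0

/-- `ww ℓ n = Σ_{0 ≤ m ≤ n, m ≡ ℓ-1 (mod ℓ)} bb ℓ n m`. -/
def ww (ℓ : ℕ) (n : ℕ) : ℕ :=
  ∑ m ∈ Finset.range (n+1), if m % ℓ = ℓ - 1 then bb ℓ n m else 0

lemma aa_eq_zero : ∀ n m, n < m → aa n m = 0 := by
  intro n
  induction n with
  | zero => intro m h; simp [aa]; omega
  | succ n ih =>
    intro m h
    have h1 : aa n (m+1) = 0 := ih _ (by omega)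
    have h2 : aa n (m-1) = 0 := ih _ (by omega)
    simp [aa, h1, h2]

lemma aa_le_two_pow : ∀ n m, aa n m ≤ 2^n := by
  intro n
  induction n with
  | zero => intro m; simp [aa]; split <;> simp
  | succ n ih =>
    intro m
    have h1 := ih (m+1)
    have h2 := ih (m-1)
    simp only [aa]
    have : (if m = 0 then 0 else aa n (m-1)) ≤ 2^n := by split <;> omega
    calc aa n (m+1) + (if m = 0 then 0 else aa n (m-1)) ≤ 2^n + 2^n := by omega
      _ = 2^(n+1) := by ring

lemma bb_eq_zero (ℓ : ℕ) : ∀ n m, n < m → bb ℓ n m = 0 := by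
  intro n
  induction n with
  | zero => intro m h; simp only [bb]; rw [aa_eq_zero _ _ h]; simp; omega
  | succ n ih =>
    intro m h
    have h1 : bb ℓ n (m+1) = 0 := ih _ (by omega)
    have h2 : bb ℓ n (m-1) = 0 := ih _ (by omega)
    simp only [bb, aa_eq_zero _ _ h, h1, h2]
    split
    · rfl
    split
    · split <;> rfl
    · split <;> rfl

lemma bb_le_two_pow (ℓ : ℕ) : ∀ n m, bb ℓ n m ≤ 2^n := by
  intro n
  induction n with
  | zero =>
    intro m; simp only [bb]
    split
    · exact aa_le_two_pow 0 m
    · split <;> simp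
  | succ n ih =>
    intro m
    have h1 := ih (m+1)
    have h2 := ih (m-1)
    have hpow : (2:ℕ)^n + 2^n = 2^(n+1) := by ring
    simp only [bb]
    split
    · exact aa_le_two_pow (n+1) m
    split
    · split
      · positivity
      · omega
    · split <;> omega

lemma succ_mod_iff {ℓ r : ℕ} (hℓ : 2 ≤ ℓ) (hr1 : 1 ≤ r) (hrℓ : r < ℓ) (m : ℕ) :
    (m + 1) % ℓ = r ↔ m % ℓ = r - 1 := by
  have hm : m % ℓ < ℓ := Nat.mod_lt _ (by omega)
  have h1 : (m + 1) % ℓ = (m % ℓ + 1) % ℓ := by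
    conv_lhs => rw [Nat.add_mod]
    rw [Nat.mod_eq_of_lt (show 1 < ℓ by omega)]
  rcases eq_or_lt_of_le (Nat.succ_le_of_lt hm) with h | h
  · rw [h1, show m % ℓ + 1 = ℓ from h, Nat.mod_self]
    constructor <;> intro h' <;> omega
  · rw [h1, Nat.mod_eq_of_lt h]
    omega

def cB (ℓ r n : ℕ) : ℕ := ∑ m ∈ Finset.range (n+1), if m % ℓ = r then bb ℓ n m else 0

lemma cB_zero {ℓ r : ℕ} (hr : r ≠ 0) : cB ℓ r 0 = 0 := by
  simp [cB, Nat.zero_mod, Ne.symm hr]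

lemma cB_le (ℓ r n : ℕ) : cB ℓ r n ≤ (n+1) * 2^n := by
  calc cB ℓ r n ≤ ∑ m ∈ Finset.range (n+1), 2^n := by
        apply Finset.sum_le_sum
        intro m _
        split
        · exact bb_le_two_pow ℓ n m
        · positivity
    _ = (n+1) * 2^n := by simp [Finset.sum_const, Finset.card_range]

lemma cB_rec_mid {ℓ r : ℕ} (hℓ : 3 ≤ ℓ) (hr1 : 1 ≤ r) (hr2 : r + 3 ≤ ℓ) (n : ℕ) :
    cB ℓ r (n+1) = cB ℓ (r-1) n + cB ℓ (r+1) n := by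
  have hstep : ∀ m, (if m % ℓ = r then bb ℓ (n+1) m else 0) =
      (if m % ℓ = r then (if m = 0 then 0 else bb ℓ n (m-1)) else 0) +
      (if m % ℓ = r then bb ℓ n (m+1) else 0) := by
    intro m
    by_cases hm : m % ℓ = r
    · simp only [hm, if_pos]
      simp only [bb]
      rw [if_neg (by omega), if_neg (by omega)]
    · simp [hm]
  have hA : ∑ m ∈ Finset.range (n+2),
      (if m % ℓ = r then (if m = 0 then 0 else bb ℓ n (m-1)) else 0) = cB ℓ (r-1) n := by
    rw [Finset.sum_range_succ']
    simp only [Nat.zero_mod, Nat.add_sub_cancel, Nat.succ_ne_zero, if_false]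
    rw [if_neg (by omega), add_zero]
    apply Finset.sum_congr rfl
    intro m _
    simp only [succ_mod_iff (show 2 ≤ ℓ by omega) hr1 (show r < ℓ by omega)]
  have hB : ∑ m ∈ Finset.range (n+2), (if m % ℓ = r then bb ℓ n (m+1) else 0) =
      cB ℓ (r+1) n := by
    rw [Finset.sum_range_succ, Finset.sum_range_succ]
    rw [bb_eq_zero ℓ n (n+1) (by omega), bb_eq_zero ℓ n (n+1+1) (by omega)]
    simp only [ite_self, add_zero]
    unfold cB
    rw [Finset.sum_range_succ']
    rw [if_neg (by simp), add_zero]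
    apply Finset.sum_congr rfl
    intro m _
    simp only [succ_mod_iff (show 2 ≤ ℓ by omega) (show 1 ≤ r+1 by omega) (show r+1 < ℓ by omega),
      Nat.add_sub_cancel]
  calc cB ℓ r (n+1) = ∑ m ∈ Finset.range (n+2),
        ((if m % ℓ = r then (if m = 0 then 0 else bb ℓ n (m-1)) else 0) +
        (if m % ℓ = r then bb ℓ n (m+1) else 0)) := by
        unfold cB; exact Finset.sum_congr rfl (fun m _ => hstep m)
    _ = cB ℓ (r-1) n + cB ℓ (r+1) n := by rw [Finset.sum_add_distrib, hA, hB]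

lemma cB_rec_top {ℓ : ℕ} (hℓ : 3 ≤ ℓ) (n : ℕ) :
    cB ℓ (ℓ-2) (n+1) = cB ℓ (ℓ-3) n := by
  have hstep : ∀ m, (if m % ℓ = ℓ-2 then bb ℓ (n+1) m else 0) =
      (if m % ℓ = ℓ-2 then (if m = 0 then 0 else bb ℓ n (m-1)) else 0) := by
    intro m
    by_cases hm : m % ℓ = ℓ-2
    · rw [if_pos hm, if_pos hm]
      simp only [bb]
      rw [if_neg (by omega), if_pos hm]
    · simp [hm]
  calc cB ℓ (ℓ-2) (n+1) = ∑ m ∈ Finset.range (n+2),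
        (if m % ℓ = ℓ-2 then (if m = 0 then 0 else bb ℓ n (m-1)) else 0) := by
        unfold cB; exact Finset.sum_congr rfl (fun m _ => hstep m)
    _ = cB ℓ (ℓ-3) n := by
        rw [Finset.sum_range_succ']
        simp only [Nat.zero_mod, Nat.add_sub_cancel, Nat.succ_ne_zero, if_false]
        rw [if_neg (by omega), add_zero]
        apply Finset.sum_congr rfl
        intro m _
        simp only [succ_mod_iff (show 2 ≤ ℓ by omega) (show 1 ≤ ℓ-2 by omega) (show ℓ-2 < ℓ by omega),
          show ℓ-2-1 = ℓ-3 by omega]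

lemma cB_summable {ℓ r : ℕ} {x : ℝ} (hx0 : 0 ≤ x) (hx : x < 1/2) :
    Summable (fun n : ℕ => (cB ℓ r n : ℝ) * x ^ n) := by
  have h2x0 : (0:ℝ) ≤ 2*x := by linarith
  have h2x : 2*x < 1 := by linarith
  have hs1 : Summable (fun n : ℕ => (n:ℝ) * (2*x)^n) := by
    simpa using summable_pow_mul_geometric_of_norm_lt_one 1
      (show ‖(2*x : ℝ)‖ < 1 by rw [Real.norm_eq_abs, abs_of_nonneg h2x0]; exact h2x)
  have hs2 : Summable (fun n : ℕ => ((2:ℝ)*x)^n) := summable_geometric_of_lt_one h2x0 h2x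
  have hs : Summable (fun n : ℕ => ((n:ℝ)+1) * (2*x)^n) := by
    refine (hs1.add hs2).congr fun n => ?_
    ring
  refine Summable.of_nonneg_of_le (fun n => by positivity) (fun n => ?_) hs
  have hb : (cB ℓ r n : ℝ) ≤ ((n:ℝ)+1) * 2^n := by exact_mod_cast cB_le ℓ r n
  calc (cB ℓ r n : ℝ) * x^n ≤ (((n:ℝ)+1) * 2^n) * x^n := by
        apply mul_le_mul_of_nonneg_right hb (by positivity)
    _ = ((n:ℝ)+1) * (2*x)^n := by rw [mul_pow]; ring


/-- For `ℓ ≥ 3`, `2 ≤ j ≤ ℓ`, and `0 < x < 1/2`: both series converge absolutely and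
`Σ_n (Σ_{0≤m≤n, m≡ℓ−j (ℓ)} b(n,m))·xⁿ = U_{j−2}(1/(2x)) · Σ_n (Σ_{0≤m≤n, m≡ℓ−2 (ℓ)} b(n,m))·xⁿ`. -/
theorem stmt14 (ℓ : ℕ) (hℓ : 3 ≤ ℓ) (j : ℕ) (hj2 : 2 ≤ j) (hjℓ : j ≤ ℓ)
    (x : ℝ) (hx0 : 0 < x) (hx : x < 1/2) :
    Summable (fun n : ℕ =>
      (∑ m ∈ Finset.range (n+1), if m % ℓ = ℓ - j then (bb ℓ n m : ℝ) else 0) * x ^ n) ∧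
    Summable (fun n : ℕ =>
      (∑ m ∈ Finset.range (n+1), if m % ℓ = ℓ - 2 then (bb ℓ n m : ℝ) else 0) * x ^ n) ∧
    ∑' n : ℕ, (∑ m ∈ Finset.range (n+1), if m % ℓ = ℓ - j then (bb ℓ n m : ℝ) else 0) * x ^ n =
      (Polynomial.Chebyshev.U ℝ ((j : ℤ) - 2)).eval (1 / (2 * x)) *
        ∑' n : ℕ,
          (∑ m ∈ Finset.range (n+1), if m % ℓ = ℓ - 2 then (bb ℓ n m : ℝ) else 0) * x ^ n := by
  have hxne : x ≠ 0 := ne_of_gt hx0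
  have hsum : ∀ r, Summable (fun n : ℕ => (cB ℓ r n : ℝ) * x ^ n) :=
    fun r => cB_summable hx0.le hx
  set g : ℕ → ℝ := fun r => ∑' n : ℕ, (cB ℓ r n : ℝ) * x ^ n with hg
  have hshift : ∀ r : ℕ, r ≠ 0 → g r = x * ∑' n : ℕ, (cB ℓ r (n+1) : ℝ) * x ^ n := by
    intro r hr
    rw [hg]
    simp only
    rw [Summable.tsum_eq_zero_add (hsum r), cB_zero hr]
    simp only [Nat.cast_zero, zero_mul, zero_add]
    rw [← tsum_mul_left]
    exact tsum_congr fun n => by ring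
  have hrel_mid : ∀ r, 1 ≤ r → r + 3 ≤ ℓ → g r = x * (g (r-1) + g (r+1)) := by
    intro r h1 h2
    rw [hshift r (by omega)]
    congr 1
    rw [hg]
    simp only
    rw [← Summable.tsum_add (hsum (r-1)) (hsum (r+1))]
    refine tsum_congr fun n => ?_
    rw [cB_rec_mid hℓ h1 h2 n]
    push_cast
    ring
  have hrel_top : g (ℓ-2) = x * g (ℓ-3) := by
    rw [hshift (ℓ-2) (by omega)]
    congr 1
    exact tsum_congr fun n => by rw [cB_rec_top hℓ n]
  have key : ∀ k : ℕ, k + 2 ≤ ℓ →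
      g (ℓ-(k+2)) = (Polynomial.Chebyshev.U ℝ (k : ℤ)).eval (1/(2*x)) * g (ℓ-2) := by
    intro k
    induction k using Nat.strong_induction_on with
    | _ k ih =>
      match k with
      | 0 => intro _; simp [Polynomial.Chebyshev.U_zero]
      | 1 =>
        intro h
        rw [show ℓ-(1+2) = ℓ-3 by omega]
        rw [show ((1:ℕ):ℤ) = (1:ℤ) by norm_num, Polynomial.Chebyshev.U_one]
        simp only [Polynomial.eval_mul, Polynomial.eval_ofNat, Polynomial.eval_X]
        rw [hrel_top]
        field_simp
      | (k+2) =>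
        intro h
        have ih1 := ih (k+1) (by omega) (by omega)
        have ih0 := ih k (by omega) (by omega)
        have hrel := hrel_mid (ℓ-(k+3)) (by omega) (by omega)
        rw [show ℓ-(k+3)-1 = ℓ-(k+2+2) by omega, show ℓ-(k+3)+1 = ℓ-(k+2) by omega,
            show ℓ-(k+3) = ℓ-(k+1+2) by omega] at hrel
        rw [show ((k+1:ℕ):ℤ) = (k:ℤ)+1 by push_cast; ring] at ih1
        rw [ih1, ih0] at hrel
        have hU := Polynomial.Chebyshev.U_add_two ℝ (k : ℤ)
        rw [show ((k+2:ℕ):ℤ) = (k:ℤ)+2 by push_cast; ring, hU]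
        simp only [Polynomial.eval_sub, Polynomial.eval_mul, Polynomial.eval_ofNat,
          Polynomial.eval_X]
        set A := (Polynomial.Chebyshev.U ℝ ((k:ℤ)+1)).eval (1/(2*x)) with hA
        set B := (Polynomial.Chebyshev.U ℝ (k:ℤ)).eval (1/(2*x)) with hB
        -- hrel : A * g (ℓ-2) = x * (g (ℓ-(k+2+2)) + B * g (ℓ-2))
        have hrel' : x * g (ℓ-(k+2+2)) = A * g (ℓ-2) - x * (B * g (ℓ-2)) := by
          rw [hrel]; ring
        field_simp
        linear_combination hrel'
  refine ⟨?_, ?_, ?_⟩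
  · exact (hsum (ℓ-j)).congr fun n => by
      rw [show ((cB ℓ (ℓ-j) n : ℝ)) = ∑ m ∈ Finset.range (n+1),
        if m % ℓ = ℓ - j then (bb ℓ n m : ℝ) else 0 by simp [cB]]
  · exact (hsum (ℓ-2)).congr fun n => by
      rw [show ((cB ℓ (ℓ-2) n : ℝ)) = ∑ m ∈ Finset.range (n+1),
        if m % ℓ = ℓ - 2 then (bb ℓ n m : ℝ) else 0 by simp [cB]]
  · have e1 : ∑' n : ℕ, (∑ m ∈ Finset.range (n+1),
        if m % ℓ = ℓ - j then (bb ℓ n m : ℝ) else 0) * x ^ n = g (ℓ-j) :=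
      tsum_congr fun n => by
        rw [show ((cB ℓ (ℓ-j) n : ℝ)) = ∑ m ∈ Finset.range (n+1),
          if m % ℓ = ℓ - j then (bb ℓ n m : ℝ) else 0 by simp [cB]]
    have e2 : ∑' n : ℕ, (∑ m ∈ Finset.range (n+1),
        if m % ℓ = ℓ - 2 then (bb ℓ n m : ℝ) else 0) * x ^ n = g (ℓ-2) :=
      tsum_congr fun n => by
        rw [show ((cB ℓ (ℓ-2) n : ℝ)) = ∑ m ∈ Finset.range (n+1),
          if m % ℓ = ℓ - 2 then (bb ℓ n m : ℝ) else 0 by simp [cB]]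
    rw [e1, e2]
    have hk := key (j-2) (by omega)
    rw [show (j-2)+2 = j by omega] at hk
    rw [show ((j-2:ℕ):ℤ) = (j:ℤ)-2 by omega] at hk
    exact hk
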